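/- arXiv:1210.4694 — 7 statements merged into one kernel-verified Lean document; each statement's English description precedes it below -/
import Mathlib

section
/- Let P = {x ∈ ℝ^m : aⱼᵀx ≤ bⱼ, j ∈ [n]} be a simple polytope, and let x and y be adjacent vertices lying on the common facets F_{s₂},...,F_{s_m}, with x additionally on F_{s₁} and y additionally on F_{s₀}. Then det[a_{s₀} a_{s₂} ⋯ a_{s_m}] and det[a_{s₁} a_{s₂} ⋯ a_{s_m}] have opposite signs. -/
/-!
Let `M` be the matrix with columns `a_{s₁}, …, a_{s_m}` and `d = y - x` the edge direction.
Since `d` is orthogonal to `a_{s₂}, …, a_{s_m}`, we get `dᵀ M = t e₀` with `t = a_{s₁} ⬝ d < 0`,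
while `a_{s₀} ⬝ d > 0`. Multiplying `dᵀ M adj M = det M • dᵀ` by `w = a_{s₀}` and using Cramer's
rule gives `det (M with column 0 replaced by w) * t = det M * (w ⬝ d)`, so the two determinants
have opposite signs.
-/

open Matrix

namespace Matrix

variable {R ι : Type*} [Fintype ι] [DecidableEq ι]

theorem det_updateCol_mul_eq_det_mul_dotProduct [CommRing R] (M : Matrix ι ι R) (i : ι)
    (w v : ι → R) (t : R) (h : v ᵥ* M = Pi.single i t) :
    (M.updateCol i w).det * t = M.det * (w ⬝ᵥ v) :=
  calc (M.updateCol i w).det * t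
      = Pi.single i t ⬝ᵥ (M.adjugate *ᵥ w) := by
        rw [single_dotProduct, ← cramer_eq_adjugate_mulVec, cramer_apply, mul_comm]
    _ = (v ᵥ* (M * M.adjugate)) ⬝ᵥ w := by rw [dotProduct_mulVec, ← h, vecMul_vecMul]
    _ = M.det * (w ⬝ᵥ v) := by
        rw [mul_adjugate, vecMul_smul, vecMul_one, smul_dotProduct, dotProduct_comm, smul_eq_mul]

theorem det_updateCol_mul_det_neg [CommRing R] [LinearOrder R] [IsStrictOrderedRing R]
    {M : Matrix ι ι R} (hM : M.det ≠ 0) {i : ι} {w v : ι → R} {t : R}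
    (h : v ᵥ* M = Pi.single i t) (ht : t < 0) (hw : 0 < w ⬝ᵥ v) :
    (M.updateCol i w).det * M.det < 0 := by
  have key := det_updateCol_mul_eq_det_mul_dotProduct M i w v t h
  have hpos : 0 < (M.updateCol i w).det * M.det * t := by
    calc 0 < M.det * M.det * (w ⬝ᵥ v) := mul_pos (mul_self_pos.mpr hM) hw
      _ = _ := by linear_combination -M.det * key
  exact neg_of_mul_pos_left hpos ht.le

end Matrix

theorem stmt_5_general (m n : ℕ) (hm : 0 < m)
    (a : Fin n → Fin m → ℝ) (b : Fin n → ℝ)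
    (s : Fin (m + 1) → Fin n)
    (x y : Fin m → ℝ)
    (hx : ∀ p : Fin (m + 1), p ≠ 0 → ∑ i, a (s p) i * x i = b (s p))
    (hy : ∀ p : Fin (m + 1), p ≠ 1 → ∑ i, a (s p) i * y i = b (s p))
    (hx0 : ∑ i, a (s 0) i * x i < b (s 0))
    (hy1 : ∑ i, a (s 1) i * y i < b (s 1))
    (hindx : LinearIndependent ℝ (fun p : Fin m => a (s p.succ))) :
    (Matrix.of fun i j : Fin m => if j.val = 0 then a (s 0) i else a (s j.succ) i).det *
      (Matrix.of fun i j : Fin m => if j.val = 0 then a (s 1) i else a (s j.succ) i).det < 0 := by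
  have : NeZero m := ⟨hm.ne'⟩
  have h01 : (0 : Fin (m + 1)) ≠ 1 := by simp
  have hdir (p : Fin (m + 1)) :
      a (s p) ⬝ᵥ (y - x) = ∑ i, a (s p) i * y i - ∑ i, a (s p) i * x i :=
    dotProduct_sub _ _ _
  set M : Matrix (Fin m) (Fin m) ℝ := (Matrix.of fun p => a (s p.succ))ᵀ
  have hM : (Matrix.of fun i j : Fin m => if j.val = 0 then a (s 1) i else a (s j.succ) i) = M := by
    ext i j
    by_cases hj : j = 0 <;> simp [M, Fin.val_eq_zero_iff, hj]
  have hN : (Matrix.of fun i j : Fin m => if j.val = 0 then a (s 0) i else a (s j.succ) i) =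
      M.updateCol 0 (a (s 0)) := by
    ext i j
    by_cases hj : j = 0 <;> simp [M, Fin.val_eq_zero_iff, hj]
  have hMdet : M.det ≠ 0 := by
    rw [det_transpose, ← isUnit_iff_ne_zero, ← isUnit_iff_isUnit_det,
      ← linearIndependent_rows_iff_isUnit]
    exact hindx
  have hv : (y - x) ᵥ* M = Pi.single 0 (a (s 1) ⬝ᵥ (y - x)) := by
    ext j
    change (y - x) ⬝ᵥ a (s j.succ) = _
    rw [dotProduct_comm]
    rcases eq_or_ne j 0 with rfl | hj
    · simp
    · rw [Pi.single_eq_of_ne hj, hdir, hx _ (Fin.succ_ne_zero j),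
        hy _ (Fin.succ_zero_eq_one' (n := m) ▸ (Fin.succ_injective _).ne hj), sub_self]
  rw [hN, hM]
  refine det_updateCol_mul_det_neg hMdet hv ?_ ?_
  · rw [hdir, hx 1 h01.symm]
    exact sub_neg.mpr hy1
  · rw [hdir, hy 0 h01]
    exact sub_pos.mpr hx0

/-- Let P = {x ∈ ℝ^m : aⱼᵀx ≤ bⱼ, j ∈ [n]} be a simple polytope, and let x, y
be adjacent vertices lying on the common facets F_{s₂},…,F_{s_m}, with x
additionally on F_{s₁} (but not F_{s₀}) and y additionally on F_{s₀} (but not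
F_{s₁}); at each vertex the normal vectors of its m facets are linearly
independent.  Then det[a_{s₀} a_{s₂} ⋯ a_{s_m}] and det[a_{s₁} a_{s₂} ⋯ a_{s_m}]
have opposite signs. -/
theorem stmt_5 (m n : ℕ) (hm : 0 < m)
    (a : Fin n → Fin m → ℝ) (b : Fin n → ℝ)
    (s : Fin (m + 1) → Fin n)
    (x y : Fin m → ℝ)
    (hxP : ∀ j, ∑ i, a j i * x i ≤ b j)
    (hyP : ∀ j, ∑ i, a j i * y i ≤ b j)
    (hx : ∀ p : Fin (m + 1), p ≠ 0 → ∑ i, a (s p) i * x i = b (s p))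
    (hy : ∀ p : Fin (m + 1), p ≠ 1 → ∑ i, a (s p) i * y i = b (s p))
    (hx0 : ∑ i, a (s 0) i * x i < b (s 0))
    (hy1 : ∑ i, a (s 1) i * y i < b (s 1))
    (hindx : LinearIndependent ℝ (fun p : Fin m => a (s p.succ)))
    (hindy : LinearIndependent ℝ
      (fun p : Fin m => if p.val = 0 then a (s 0) else a (s p.succ))) :
    (Matrix.of fun i j : Fin m => if j.val = 0 then a (s 0) i else a (s j.succ) i).det *
      (Matrix.of fun i j : Fin m => if j.val = 0 then a (s 1) i else a (s j.succ) i).det < 0 :=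
  stmt_5_general m n hm a b s x y hx hy hx0 hy1 hindx
end

section
/- In a Nash equilibrium of the unit-vector game (A, Cᵀ) where each column of A is a unit vector and P = {x : x ≥ 0, Cx ≤ 1} is bounded, the equilibrium payoff u to player 1 and v to player 2 are both strictly positive. -/
open Matrix Finset

/-!
Each column of `A` is a unit vector, so the entries of `A ŷ` sum to `∑ ŷ = 1`; as all of them are
at most `u`, `u > 0`. If `v ≤ 0`, then `C x̂ ≤ 0`, so the whole ray `{t • x̂ | t ≥ 0}` lies in
`P = {x ≥ 0 | C x ≤ 1}`; since `x̂ ≠ 0`, this contradicts the boundedness of `P`.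
-/

theorem Matrix.sum_mulVec_eq_sum_of_sum_col_eq_one {m n R : Type*} [Fintype m] [Fintype n]
    [CommSemiring R] (A : Matrix m n R) (hA : ∀ j, ∑ i, A i j = 1) (y : n → R) :
    ∑ i, (A *ᵥ y) i = ∑ j, y j := by
  have hcol : (1 : m → R) ᵥ* A = 1 := funext fun j => by simp [vecMul, dotProduct, hA]
  rw [← one_dotProduct, dotProduct_mulVec, hcol, one_dotProduct]

theorem pos_of_sum_eq_one_of_forall_le {ι : Type*} [Fintype ι] {w : ι → ℝ} {u : ℝ}
    (hw : ∑ i, w i = 1) (hu : ∀ i, w i ≤ u) : 0 < u := by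
  by_contra! h
  have : ∑ i, w i ≤ 0 := Finset.sum_nonpos fun i _ => (hu i).trans h
  linarith

theorem not_isBounded_of_forall_smul_mem {E : Type*} [NormedAddCommGroup E] [NormedSpace ℝ E]
    {s : Set E} {x : E} (hx : x ≠ 0) (hs : ∀ t : ℝ, 0 ≤ t → t • x ∈ s) :
    ¬ Bornology.IsBounded s := by
  intro hbdd
  obtain ⟨r, hr⟩ := isBounded_iff_forall_norm_le.1 hbdd
  have hnx : 0 < ‖x‖ := norm_pos_iff.2 hx
  have hr0 : 0 ≤ r := (norm_nonneg _).trans (hr _ (hs 0 le_rfl))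
  have ht : 0 ≤ (r + 1) / ‖x‖ := by positivity
  have := hr _ (hs _ ht)
  rw [norm_smul, Real.norm_of_nonneg ht, div_mul_cancel₀ _ hnx.ne'] at this
  linarith

theorem Matrix.smul_mem_polyhedron_of_mulVec_nonpos {m k : Type*} [Fintype m]
    {C : Matrix k m ℝ} {x : m → ℝ} (hx : ∀ i, 0 ≤ x i) (hCx : ∀ j, (C *ᵥ x) j ≤ 0)
    {t : ℝ} (ht : 0 ≤ t) :
    t • x ∈ {x : m → ℝ | (∀ i, 0 ≤ x i) ∧ ∀ j, (C *ᵥ x) j ≤ 1} := by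
  refine ⟨fun i => mul_nonneg ht (hx i), fun j => ?_⟩
  rw [mulVec_smul, Pi.smul_apply, smul_eq_mul]
  linarith [mul_nonpos_of_nonneg_of_nonpos ht (hCx j)]

theorem stmt_7_general (m k : ℕ)
    (A : Matrix (Fin m) (Fin k) ℝ) (C : Matrix (Fin k) (Fin m) ℝ)
    (hA : ∀ j : Fin k, ∃ i : Fin m, ∀ i', A i' j = if i' = i then 1 else 0)
    (hbdd : Bornology.IsBounded
      {x : Fin m → ℝ | (∀ i, 0 ≤ x i) ∧ ∀ j, C.mulVec x j ≤ 1})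
    (xh : Fin m → ℝ) (yh : Fin k → ℝ)
    (hx1 : ∀ i, 0 ≤ xh i) (hx2 : ∑ i, xh i = 1)
    (hy2 : ∑ j, yh j = 1)
    (u v : ℝ)
    (hu : ∀ i, A.mulVec yh i ≤ u)
    (hv : ∀ j, C.mulVec xh j ≤ v) :
    0 < u ∧ 0 < v := by
  have hcol : ∀ j, ∑ i, A i j = 1 := fun j => by
    obtain ⟨i, hi⟩ := hA j
    simp [hi]
  refine ⟨pos_of_sum_eq_one_of_forall_le
    (by rw [A.sum_mulVec_eq_sum_of_sum_col_eq_one hcol, hy2]) hu, ?_⟩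
  by_contra! hv0
  have hxh : xh ≠ 0 := by
    rintro rfl
    simp at hx2
  exact not_isBounded_of_forall_smul_mem hxh
    (fun t ht => smul_mem_polyhedron_of_mulVec_nonpos hx1 (fun j => (hv j).trans hv0) ht) hbdd

/-- In a Nash equilibrium of the unit-vector game (A, Cᵀ), where each column
of A is a standard unit vector and P = {x : x ≥ 0, Cx ≤ 1} is bounded, the
equilibrium payoffs u to player 1 and v to player 2 are both strictly
positive. -/
theorem stmt_7 (m k : ℕ)
    (A : Matrix (Fin m) (Fin k) ℝ) (C : Matrix (Fin k) (Fin m) ℝ)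
    (hA : ∀ j : Fin k, ∃ i : Fin m, ∀ i', A i' j = if i' = i then 1 else 0)
    (hbdd : Bornology.IsBounded
      {x : Fin m → ℝ | (∀ i, 0 ≤ x i) ∧ ∀ j, C.mulVec x j ≤ 1})
    (xh : Fin m → ℝ) (yh : Fin k → ℝ)
    (hx1 : ∀ i, 0 ≤ xh i) (hx2 : ∑ i, xh i = 1)
    (hy1 : ∀ j, 0 ≤ yh j) (hy2 : ∑ j, yh j = 1)
    (u v : ℝ)
    (hu : ∀ i, A.mulVec yh i ≤ u) (hucomp : ∀ i, 0 < xh i → A.mulVec yh i = u)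
    (hv : ∀ j, C.mulVec xh j ≤ v) (hvcomp : ∀ j, 0 < yh j → C.mulVec xh j = v)
    (hupay : u = xh ⬝ᵥ A.mulVec yh) (hvpay : v = yh ⬝ᵥ C.mulVec xh) :
    0 < u ∧ 0 < v :=
  stmt_7_general m k A C hA hbdd xh yh hx1 hx2 hy2 u v hu hv
end

section
/- In a labeled oriented pivoting system, the two completely labeled states at the ends of any complementary pivoting path with missing label w have opposite signs; consequently there are equally many CL states of sign +1 as of sign −1. -/
/-- A pivoting system (S, V, m, r, f). -/
structure PivotSystem (S V : Type*) (m : ℕ) where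
  r : S → Fin m → V
  f : S → Fin m → S
  perm : S → Fin m → Equiv.Perm (Fin m)
  newNode : S → Fin m → V
  new_ne : ∀ s i, newNode s i ≠ r s i
  rep : ∀ s i j, r (f s i) (perm s i j) = if j = i then newNode s i else r s j
  back : ∀ s i, f (f s i) (perm s i i) = s

/-- A state is completely labeled if its representation carries all labels. -/
def IsCL {S V : Type*} {m : ℕ} (P : PivotSystem S V m) (l : V → Fin m)
    (s : S) : Prop :=
  ∀ c : Fin m, ∃ i, l (P.r s i) = c

/-!
Fix a label `w`. Call a slot `i` of a state `s` a port if relabelling slot `i` by `w` turns the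
labels of `s` into a permutation of `[m]`, and give the port the sign `σ(s)` times the parity of
that permutation. Pivoting at a port lands at a port of the opposite sign, and this pivot map is
injective on ports, so the signs of all ports sum to zero. A CL state has exactly one port, whose
sign is the sign of the state, while any other state has either no port or two ports of opposite
signs. Hence the signs of the CL states sum to zero.
-/

open Equiv Finset Function

namespace Finset

variable {ι M : Type*} [AddCommGroup M] [IsAddTorsionFree M]

theorem sum_eq_zero_of_injOn_of_map_neg {A : Finset ι} {g : ι → ι} {φ : ι → M}
    (hg : ∀ a ∈ A, g a ∈ A) (hinj : Set.InjOn g A) (hφ : ∀ a ∈ A, φ (g a) = -φ a) :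
    ∑ a ∈ A, φ a = 0 := by
  have hsurj : Set.SurjOn g A A := surjOn_of_injOn_of_card_le g hg hinj le_rfl
  have h : ∑ a ∈ A, φ (g a) = ∑ a ∈ A, φ a := sum_nbij g hg hinj hsurj fun _ _ => rfl
  rw [sum_congr rfl hφ, sum_neg_distrib] at h
  exact neg_eq_self.mp h

theorem sum_eq_zero_of_pairwise_neg {A : Finset ι} {φ : ι → M} (h0 : ∀ a ∈ A, φ a ≠ 0)
    (hneg : ∀ a ∈ A, ∀ b ∈ A, a ≠ b → φ b = -φ a) (hA : ∀ a ∈ A, ∃ b ∈ A, b ≠ a) :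
    ∑ a ∈ A, φ a = 0 := by
  classical
  rcases A.eq_empty_or_nonempty with rfl | ⟨a, ha⟩
  · exact sum_empty
  obtain ⟨b, hb, hba⟩ := hA a ha
  have hAab : A = {a, b} := by
    ext c
    simp only [mem_insert, mem_singleton]
    refine ⟨fun hc => ?_, by rintro (rfl | rfl) <;> assumption⟩
    by_contra! hcab
    have hca := hneg a ha c hc hcab.1.symm
    rw [hneg b hb c hc hcab.2.symm, hneg a ha b hb hba.symm, neg_neg, self_eq_neg] at hca
    exact h0 a ha hca
  rw [hAab, sum_pair hba.symm, hneg a ha b hb hba.symm, add_neg_cancel]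

end Finset

theorem ncard_eq_one_eq_ncard_eq_neg_one_of_sum_eq_zero {α : Type*} [Fintype α] {p : α → Prop}
    [DecidablePred p] {g : α → ℤ} (hg : ∀ a, p a → g a = 1 ∨ g a = -1)
    (hsum : ∑ a with p a, g a = 0) :
    {a | p a ∧ g a = 1}.ncard = {a | p a ∧ g a = -1}.ncard := by
  have hsplit : ∀ a ∈ ({a | p a} : Finset α),
      g a = (if g a = 1 then 1 else 0) - (if g a = -1 then 1 else 0) := by
    intro a ha
    rcases hg a (mem_filter.1 ha).2 with h | h <;> simp [h]
  rw [sum_congr rfl hsplit, sum_sub_distrib, ← natCast_card_filter, ← natCast_card_filter,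
    filter_filter, filter_filter, sub_eq_zero, Nat.cast_inj] at hsum
  simpa only [Set.ncard_eq_toFinset_card', Set.toFinset_ofPred] using hsum

namespace PivotSystem

variable {S V : Type*} {m : ℕ} (P : PivotSystem S V m) (l : V → Fin m) (w : Fin m)

def portLabels (s : S) (i : Fin m) : Fin m → Fin m :=
  update (fun k => l (P.r s k)) i w

def IsPort (s : S) (i : Fin m) : Prop :=
  Bijective (P.portLabels l w s i)

open scoped Classical in
noncomputable def portPerm (s : S) (i : Fin m) : Perm (Fin m) :=
  if h : P.IsPort l w s i then Equiv.ofBijective _ h else 1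

noncomputable def portSign (σ : S → ℤ) (s : S) (i : Fin m) : ℤ :=
  σ s * (Perm.sign (P.portPerm l w s i) : ℤ)

variable {P l w} {s : S} {i k : Fin m}

theorem coe_portPerm (h : P.IsPort l w s i) : ⇑(P.portPerm l w s i) = P.portLabels l w s i := by
  rw [portPerm, dif_pos h]
  rfl

theorem portLabels_of_label_eq (h : l (P.r s i) = w) :
    P.portLabels l w s i = fun k => l (P.r s k) := by
  rw [portLabels, ← h]
  exact update_eq_self _ _

theorem portLabels_comp_swap (hlab : l (P.r s i) = l (P.r s k)) :
    P.portLabels l w s i ∘ swap i k = P.portLabels l w s k := by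
  funext j
  by_cases hji : j = i
  · subst hji
    rcases eq_or_ne j k with rfl | hjk
    · simp
    · simp [portLabels, update_of_ne (Ne.symm hjk), update_of_ne hjk, hlab]
  · by_cases hjk : j = k
    · subst hjk; simp [portLabels]
    · simp [portLabels, swap_apply_of_ne_of_ne hji hjk, hji, hjk]

theorem portLabels_pivot (s : S) (i : Fin m) :
    P.portLabels l w (P.f s i) (P.perm s i i) ∘ P.perm s i = P.portLabels l w s i := by
  funext j
  by_cases hj : j = i
  · subst hj; simp [portLabels]
  · simp [portLabels, P.rep, hj]

theorem IsPort.pivot (h : P.IsPort l w s i) : P.IsPort l w (P.f s i) (P.perm s i i) := by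
  rw [IsPort, ← portLabels_pivot] at h
  exact (Bijective.of_comp_iff _ (P.perm s i).bijective).1 h

theorem portPerm_pivot_mul (h : P.IsPort l w s i) :
    P.portPerm l w (P.f s i) (P.perm s i i) * P.perm s i = P.portPerm l w s i := by
  ext1 j
  rw [Perm.mul_apply, coe_portPerm h.pivot, coe_portPerm h]
  exact congrFun (portLabels_pivot s i) j

theorem label_eq_of_isPort (hi : P.IsPort l w s i) (hk : P.IsPort l w s k) (hne : i ≠ k) :
    l (P.r s i) = l (P.r s k) := by
  obtain ⟨j, hj⟩ := hi.2 (l (P.r s i))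
  by_cases hji : j = i
  · subst hji
    refine absurd (hk.1 ?_) hne
    simp_all [portLabels]
  by_cases hjk : j = k
  · subst hjk
    simpa [portLabels, hji] using hj.symm
  refine absurd (hk.1 ?_) hji
  simp_all [portLabels]

section Sign

open scoped Classical

variable {σ : S → ℤ}

theorem isUnit_portSign (hσval : ∀ s, σ s = 1 ∨ σ s = -1) : IsUnit (P.portSign l w σ s i) :=
  (Int.isUnit_iff.2 (hσval s)).mul (Units.isUnit _)

theorem portSign_pivot (hσ : ∀ s i, σ (P.f s i) = -σ s * (Perm.sign (P.perm s i) : ℤ))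
    (h : P.IsPort l w s i) :
    P.portSign l w σ (P.f s i) (P.perm s i i) = -P.portSign l w σ s i := by
  rw [portSign, portSign, ← portPerm_pivot_mul h, Perm.sign_mul, hσ]
  push_cast
  ring

theorem portSign_of_ne (hi : P.IsPort l w s i) (hk : P.IsPort l w s k) (hne : i ≠ k) :
    P.portSign l w σ s k = -P.portSign l w σ s i := by
  have hperm : P.portPerm l w s k = P.portPerm l w s i * swap i k := by
    ext1 j
    rw [Perm.mul_apply, coe_portPerm hi, coe_portPerm hk,
      ← portLabels_comp_swap (label_eq_of_isPort hi hk hne)]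
    rfl
  rw [portSign, portSign, hperm, Perm.sign_mul, Perm.sign_swap hne]
  push_cast
  ring

theorem isPort_iff_of_isCL (hs : IsCL P l s) : P.IsPort l w s i ↔ l (P.r s i) = w := by
  refine ⟨fun h => ?_, fun h => ?_⟩
  · by_contra hne
    obtain ⟨j, hj⟩ := hs w
    have hji : j ≠ i := by rintro rfl; exact hne hj
    exact hji (h.1 (by simp [portLabels, hji, hj]))
  · rw [IsPort, portLabels_of_label_eq h]
    exact Finite.surjective_iff_bijective.1 hs

theorem portSign_of_label_eq (sgn : S → ℤ)
    (hsgn : ∀ (s : S) (e : Perm (Fin m)),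
      (∀ i, e i = l (P.r s i)) → sgn s = σ s * (Perm.sign e : ℤ))
    (hs : IsCL P l s) (h : l (P.r s i) = w) : P.portSign l w σ s i = sgn s := by
  refine (hsgn s _ fun k => ?_).symm
  rw [coe_portPerm ((isPort_iff_of_isCL hs).2 h), portLabels_of_label_eq h]

theorem sgn_eq_one_or_neg_one_of_isCL (hσval : ∀ s, σ s = 1 ∨ σ s = -1) (sgn : S → ℤ)
    (hsgn : ∀ (s : S) (e : Perm (Fin m)),
      (∀ i, e i = l (P.r s i)) → sgn s = σ s * (Perm.sign e : ℤ))
    (hs : IsCL P l s) : sgn s = 1 ∨ sgn s = -1 := by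
  rw [hsgn s (Equiv.ofBijective _ (Finite.surjective_iff_bijective.1 hs)) fun _ => rfl]
  exact Int.isUnit_iff.1 ((Int.isUnit_iff.2 (hσval s)).mul (Units.isUnit _))

theorem exists_isPort_ne_of_not_isCL (hs : ¬IsCL P l s) (h : P.IsPort l w s i) :
    ∃ k ≠ i, P.IsPort l w s k := by
  have hiw : l (P.r s i) ≠ w := fun hw => by
    have hsurj := h.2
    rw [portLabels_of_label_eq hw] at hsurj
    exact hs hsurj
  obtain ⟨k, hk⟩ := h.2 (l (P.r s i))
  have hki : k ≠ i := by rintro rfl; simp [portLabels] at hk; exact hiw hk.symm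
  have hlab : l (P.r s i) = l (P.r s k) := by simpa [portLabels, hki] using hk.symm
  refine ⟨k, hki, ?_⟩
  rw [IsPort, ← portLabels_comp_swap hlab]
  exact h.comp (swap i k).bijective

theorem sum_portSign (hσval : ∀ s, σ s = 1 ∨ σ s = -1) (sgn : S → ℤ)
    (hsgn : ∀ (s : S) (e : Perm (Fin m)),
      (∀ i, e i = l (P.r s i)) → sgn s = σ s * (Perm.sign e : ℤ)) (s : S) :
    ∑ i with P.IsPort l w s i, P.portSign l w σ s i = if IsCL P l s then sgn s else 0 := by
  split_ifs with hs
  · obtain ⟨i, hi⟩ := hs w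
    have hports : ({j | P.IsPort l w s j} : Finset (Fin m)) = {i} := by
      ext j
      simp only [mem_filter, mem_univ, true_and, mem_singleton, isPort_iff_of_isCL hs, ← hi]
      exact (Finite.injective_iff_surjective.2 hs).eq_iff
    rw [hports, sum_singleton, portSign_of_label_eq sgn hsgn hs hi]
  · refine sum_eq_zero_of_pairwise_neg (fun _ _ => (isUnit_portSign hσval).ne_zero)
      (fun i hi k hk hne => portSign_of_ne (mem_filter.1 hi).2 (mem_filter.1 hk).2 hne)
      (fun i hi => ?_)
    obtain ⟨k, hki, hk⟩ := exists_isPort_ne_of_not_isCL hs (mem_filter.1 hi).2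
    exact ⟨k, mem_filter.2 ⟨mem_univ k, hk⟩, hki⟩

theorem sum_portSign_eq_zero [Fintype S] (hσval : ∀ s, σ s = 1 ∨ σ s = -1)
    (hσ : ∀ s i, σ (P.f s i) = -σ s * (Perm.sign (P.perm s i) : ℤ)) :
    ∑ p : S × Fin m with P.IsPort l w p.1 p.2, P.portSign l w σ p.1 p.2 = 0 := by
  refine sum_eq_zero_of_injOn_of_map_neg (g := fun p => (P.f p.1 p.2, P.perm p.1 p.2 p.2))
    (fun p hp => mem_filter.2 ⟨mem_univ _, IsPort.pivot (mem_filter.1 hp).2⟩) ?_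
    (fun p hp => portSign_pivot hσ (mem_filter.1 hp).2)
  rintro ⟨s₁, i₁⟩ h₁ ⟨s₂, i₂⟩ h₂ heq
  replace h₁ := (mem_filter.1 h₁).2
  replace h₂ := (mem_filter.1 h₂).2
  obtain ⟨hf, hperm⟩ := Prod.mk.inj heq
  obtain rfl : s₁ = s₂ := by rw [← P.back s₁ i₁, ← P.back s₂ i₂, hf, hperm]
  by_contra hne
  have hi : i₁ ≠ i₂ := fun h => hne (h ▸ rfl)
  -- equal images have equal signs, while distinct ports of one state have opposite signs
  have h := portSign_pivot hσ h₁
  rw [hf, hperm, portSign_pivot hσ h₂, portSign_of_ne h₁ h₂ hi, neg_neg, self_eq_neg] at h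
  exact (isUnit_portSign hσval).ne_zero h

end Sign

end PivotSystem

open PivotSystem in
/-- In a labeled oriented pivoting system (σ(t) = −σ(s)·parity(π(s,i)) for
t = f(s,i)), the two CL states at the ends of a complementary pivoting path
have opposite signs, where the sign of a CL state s is σ(s) times the parity
of the permutation (l(s₁),…,l(s_m)); consequently, there are equally many CL
states of sign +1 as of sign −1. -/
theorem stmt_9 {S V : Type*} [Fintype S] {m : ℕ} (hm : 0 < m)
    (P : PivotSystem S V m) (l : V → Fin m)
    (σ : S → ℤ) (hσval : ∀ s, σ s = 1 ∨ σ s = -1)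
    (hσ : ∀ s i, σ (P.f s i) = -σ s * (Equiv.Perm.sign (P.perm s i) : ℤ))
    (sgn : S → ℤ)
    (hsgn : ∀ (s : S) (e : Equiv.Perm (Fin m)),
      (∀ i, e i = l (P.r s i)) → sgn s = σ s * (Equiv.Perm.sign e : ℤ)) :
    Set.ncard {s : S | IsCL P l s ∧ sgn s = 1} =
      Set.ncard {s : S | IsCL P l s ∧ sgn s = -1} := by
  classical
  let w : Fin m := ⟨0, hm⟩
  refine ncard_eq_one_eq_ncard_eq_neg_one_of_sum_eq_zero
    (fun s hs => sgn_eq_one_or_neg_one_of_isCL hσval sgn hsgn hs) ?_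
  calc ∑ s with IsCL P l s, sgn s
      = ∑ s, ∑ i with P.IsPort l w s i, P.portSign l w σ s i := by
        rw [sum_filter]
        exact sum_congr rfl fun s _ => (sum_portSign hσval sgn hsgn s).symm
    _ = ∑ p : S × Fin m with P.IsPort l w p.1 p.2, P.portSign l w σ p.1 p.2 := by
        rw [sum_filter, Fintype.sum_prod_type]
        simp only [sum_filter]
    _ = 0 := sum_portSign_eq_zero hσval hσ
end

section
/- Pivoting from an ACL state s at a duplicate-label position i to t = f(s,i) in a labeled oriented pivoting system satisfies sign(s,i) = −sign(t,π(i)), where π = π(s,i). -/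
namespace PivotSystem

variable {S V : Type*} {m : ℕ}

theorem update_comp_perm {α : Type*} (P : PivotSystem S V m) (g : V → α) (w : α) (s : S)
    (i : Fin m) :
    Function.update (g ∘ P.r (P.f s i)) (P.perm s i i) w ∘ P.perm s i =
      Function.update (g ∘ P.r s) i w := by
  funext p
  by_cases hp : p = i
  · simp [hp]
  · simp [(P.perm s i).injective.ne hp, hp, P.rep]

end PivotSystem

theorem stmt_11_general {S V : Type*} {m : ℕ}
    (P : PivotSystem S V m) (l : V → Fin m)
    (σ : S → ℤ)
    (hσ : ∀ s i, σ (P.f s i) = -σ s * (Equiv.Perm.sign (P.perm s i) : ℤ))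
    (s : S) (i w : Fin m)
    (e₁ e₂ : Equiv.Perm (Fin m))
    (he₁ : ∀ p, e₁ p = if p = i then w else l (P.r s p))
    (he₂ : ∀ p, e₂ p = if p = P.perm s i i then w else l (P.r (P.f s i) p)) :
    σ s * (Equiv.Perm.sign e₁ : ℤ) =
      -(σ (P.f s i) * (Equiv.Perm.sign e₂ : ℤ)) := by
  have he₁' : ⇑e₁ = Function.update (l ∘ P.r s) i w :=
    funext fun p => by simp [he₁, Function.update_apply]
  have he₂' : ⇑e₂ = Function.update (l ∘ P.r (P.f s i)) (P.perm s i i) w :=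
    funext fun p => by simp [he₂, Function.update_apply]
  have hπ : e₂ * P.perm s i = e₁ :=
    DFunLike.coe_injective (by simp only [Equiv.Perm.coe_mul, he₁', he₂', P.update_comp_perm])
  rw [← hπ, hσ, map_mul]
  push_cast
  ring

/-- Pivoting from an ACL state s at a duplicate-label position i to
t = f(s,i) in a labeled oriented pivoting system satisfies
sign(s,i) = −sign(t, π(i)) where π = π(s,i):  here e₁ is the permutation
l(r(s)) with position i replaced by the missing label w, and e₂ is the
permutation l(r(t)) with position π(i) replaced by w. -/
theorem stmt_11 {S V : Type*} {m : ℕ}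
    (P : PivotSystem S V m) (l : V → Fin m)
    (σ : S → ℤ) (hσval : ∀ s, σ s = 1 ∨ σ s = -1)
    (hσ : ∀ s i, σ (P.f s i) = -σ s * (Equiv.Perm.sign (P.perm s i) : ℤ))
    (s : S) (i w : Fin m)
    (e₁ e₂ : Equiv.Perm (Fin m))
    (he₁ : ∀ p, e₁ p = if p = i then w else l (P.r s p))
    (he₂ : ∀ p, e₂ p = if p = P.perm s i i then w else l (P.r (P.f s i) p)) :
    σ s * (Equiv.Perm.sign e₁ : ℤ) =
      -(σ (P.f s i) * (Equiv.Perm.sign e₂ : ℤ)) :=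
  stmt_11_general P l σ hσ s i w e₁ e₂ he₁ he₂
end

section
/- If each oik 𝓡_p in an oik family is coherently oriented by σ_p, then the oik-sum is coherently oriented by σ(R₁ ⊎ ⋯ ⊎ R_h) = Π_p σ_p(R_p), with nodes of [h]×V ordered lexicographically. -/
open scoped Classical

/-- The orientation induced by an oriented room (R, s) on the wall obtained
by deleting the node v of R: with the nodes of R listed in increasing order,
if v is the i-th node (1-indexed) then the induced orientation is (−1)ⁱ·s. -/
def inducedOrient {α : Type*} [LinearOrder α] (R : Finset α) (s : ℤ) (v : α) : ℤ :=
  (-1) ^ ((R.filter fun u => u < v).card + 1) * s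

/-- A coherently oriented d-oik: a multiset of rooms (d-element subsets of α)
each carrying an orientation ±1, such that every wall (a (d−1)-subset of some
room) receives induced orientation +1 from exactly half of the oriented rooms
containing it. -/
def IsCoherentOik (α : Type*) [LinearOrder α] (d : ℕ)
    (OR : Multiset (Finset α × ℤ)) : Prop :=
  (∀ x ∈ OR, x.1.card = d ∧ (x.2 = 1 ∨ x.2 = -1)) ∧
  ∀ W : Finset α, W.card = d - 1 →
    OR.countP (fun x => W ⊆ x.1 ∧ ∃ v ∈ x.1, v ∉ W ∧ inducedOrient x.1 x.2 v = 1) =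
    OR.countP (fun x => W ⊆ x.1 ∧ ∃ v ∈ x.1, v ∉ W ∧ inducedOrient x.1 x.2 v = -1)

/-!
A room of the oik-sum containing a wall `W` of the sum is `W` together with one node `(q, w)`,
where `q` is the block in which `W` misses a node; its `q`-fibre is a room `R` of `𝓡_q`
containing the wall `W_q`, and its other fibres are those of `W`. In the lexicographic order
the nodes below `(q, w)` are the nodes of `W` in earlier blocks and the nodes of `R` below `w`,
so the orientation the room induces on `W` is the orientation `R` induces on `W_q`, times a
sign depending only on `W` and on the orientations `σ_p(W_p)`, `p ≠ q`. For each choice of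
these, the rooms of the sum inducing `+1` and `-1` on `W` thus correspond to the rooms of `𝓡_q`
inducing `±c` and `∓c` on `W_q`, which are equinumerous by coherence of `𝓡_q`.
-/

open Finset

theorem Multiset.countP_eq_sum_of_forall_mem {α : Type*} [DecidableEq α] {M : Multiset α}
    {P : α → Prop} [DecidablePred P] {F : Finset α} (hF : ∀ x ∈ M, P x → x ∈ F) :
    M.countP P = ∑ x ∈ F, if P x then M.count x else 0 := by
  rw [Multiset.countP_eq_card_filter,
    ← Multiset.sum_count_eq_card fun x hx => hF x (Multiset.mem_of_mem_filter hx)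
      (Multiset.of_mem_filter hx)]
  exact sum_congr rfl fun x _ => Multiset.count_filter

theorem Fintype.sum_sum_update_bool {ι M : Type*} [DecidableEq ι] [Fintype ι] [AddCommMonoid M]
    (F : (ι → Bool) → M) (q : ι) :
    ∑ ε, ∑ b, F (Function.update ε q b) = ∑ ε, F ε + ∑ ε, F ε := by
  have hflip : Function.Involutive fun ε : ι → Bool => Function.update ε q (!ε q) :=
    fun ε => by simp
  have hpair :
      ∀ ε, ∑ b, F (Function.update ε q b) = F ε + F (Function.update ε q (!ε q)) := by
    intro ε
    rw [Fintype.sum_bool]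
    cases h : ε q
    · rw [Bool.not_false, add_comm,
        show Function.update ε q false = ε from Function.update_eq_self_iff.2 h.symm]
    · rw [Bool.not_true, Function.update_eq_self_iff.2 h.symm]
  rw [Fintype.sum_congr _ _ hpair, sum_add_distrib,
    Fintype.sum_bijective _ hflip.bijective _ F fun _ => rfl]

def boolSign (b : Bool) : ℤ := if b then 1 else -1

theorem isUnit_boolSign (b : Bool) : IsUnit (boolSign b) := by
  cases b
  exacts [isUnit_one.neg, isUnit_one]

theorem boolSign_injective : Function.Injective boolSign := by
  intro a b h
  cases a <;> cases b <;> simp_all [boolSign]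

theorem exists_boolSign_eq {s : ℤ} (hs : IsUnit s) : ∃ b, boolSign b = s := by
  rcases Int.isUnit_iff.1 hs with rfl | rfl
  exacts [⟨true, rfl⟩, ⟨false, rfl⟩]

section Orientation

variable {α : Type*} [LinearOrder α]

def InducesOrientOn (W : Finset α) (o : ℤ) (x : Finset α × ℤ) : Prop :=
  W ⊆ x.1 ∧ ∃ v ∈ x.1, v ∉ W ∧ inducedOrient x.1 x.2 v = o

noncomputable def wallCount (M : Multiset (Finset α × ℤ)) (W : Finset α) (o : ℤ) : ℕ :=
  M.countP (InducesOrientOn W o)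

theorem isCoherentOik_iff {d : ℕ} {M : Multiset (Finset α × ℤ)} :
    IsCoherentOik α d M ↔ (∀ x ∈ M, x.1.card = d ∧ IsUnit x.2) ∧
      ∀ W : Finset α, W.card = d - 1 → wallCount M W 1 = wallCount M W (-1) := by
  simp only [IsCoherentOik, wallCount, InducesOrientOn, Int.isUnit_iff]
  congr!

theorem Int.mul_eq_iff_eq_mul_of_isUnit {u x y : ℤ} (hu : IsUnit u) :
    u * x = y ↔ x = u * y := by
  rcases Int.isUnit_iff.1 hu with rfl | rfl <;> omega

theorem inducedOrient_mul (R : Finset α) (s c : ℤ) (v : α) :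
    inducedOrient R (s * c) v = c * inducedOrient R s v := by
  unfold inducedOrient; ring

theorem inducesOrientOn_mul_iff {W R : Finset α} {o t c : ℤ} (hc : IsUnit c) :
    InducesOrientOn W o (R, t * c) ↔ InducesOrientOn W (c * o) (R, t) := by
  simp only [InducesOrientOn, inducedOrient_mul, Int.mul_eq_iff_eq_mul_of_isUnit hc]

theorem wallCount_eq_sum_rooms {M : Multiset (Finset α × ℤ)} (hM : ∀ x ∈ M, IsUnit x.2)
    (W : Finset α) (o : ℤ) :
    wallCount M W o = ∑ R ∈ M.toFinset.image Prod.fst, ∑ b,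
      if InducesOrientOn W o (R, boolSign b) then M.count (R, boolSign b) else 0 := by
  have hcover : ∀ x ∈ M, InducesOrientOn W o x →
      x ∈ (M.toFinset.image Prod.fst ×ˢ univ).image fun Rb => (Rb.1, boolSign Rb.2) := by
    intro x hx _
    obtain ⟨b, hb⟩ := exists_boolSign_eq (hM x hx)
    exact mem_image.2 ⟨(x.1, b), mem_product.2 ⟨mem_image_of_mem _ (Multiset.mem_toFinset.2 hx),
      mem_univ _⟩, Prod.ext rfl hb⟩
  rw [wallCount, Multiset.countP_eq_sum_of_forall_mem hcover, sum_image, sum_product]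
  exact fun Rb _ Rb' _ h => Prod.ext (Prod.ext_iff.1 h).1 (boolSign_injective (Prod.ext_iff.1 h).2)

end Orientation

def signBefore {ι V : Type*} [LinearOrder ι] (W : Finset (ι ×ₗ V)) (q : ι) : ℤ :=
  (-1) ^ (W.filter fun u => (ofLex u).1 < q).card

theorem isUnit_signBefore {ι V : Type*} [LinearOrder ι] (W : Finset (ι ×ₗ V)) (q : ι) :
    IsUnit (signBefore W q) :=
  isUnit_one.neg.pow _

section Fiber

variable {ι V : Type*} [LinearOrder ι] [LinearOrder V]

def fiber (T : Finset (ι ×ₗ V)) (p : ι) : Finset V :=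
  (T.filter fun x => (ofLex x).1 = p).image fun x => (ofLex x).2

def replaceFiber (W : Finset (ι ×ₗ V)) (q : ι) (R : Finset V) : Finset (ι ×ₗ V) :=
  W.filter (fun x => (ofLex x).1 ≠ q) ∪ R.image fun w => toLex (q, w)

@[simp]
theorem mem_fiber {T : Finset (ι ×ₗ V)} {p : ι} {w : V} :
    w ∈ fiber T p ↔ toLex (p, w) ∈ T := by
  simp only [fiber, mem_image, mem_filter]
  constructor
  · rintro ⟨x, ⟨hx, rfl⟩, rfl⟩
    exact hx
  · exact fun h => ⟨_, ⟨h, rfl⟩, rfl⟩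

theorem ext_fiber {T T' : Finset (ι ×ₗ V)} (h : ∀ p, fiber T p = fiber T' p) : T = T' := by
  ext x
  simpa using congrArg ((ofLex x).2 ∈ ·) (h (ofLex x).1)

theorem fiber_mono {T T' : Finset (ι ×ₗ V)} (h : T ⊆ T') (p : ι) :
    fiber T p ⊆ fiber T' p :=
  fun _ hw => mem_fiber.2 (h (mem_fiber.1 hw))

theorem card_fiber (T : Finset (ι ×ₗ V)) (p : ι) :
    (fiber T p).card = (T.filter fun x => (ofLex x).1 = p).card := by
  refine card_image_of_injOn fun x hx y hy hxy => ?_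
  simp only [coe_filter] at hx hy
  exact ofLex.injective (Prod.ext (hx.2.trans hy.2.symm) hxy)

theorem card_eq_sum_card_fiber [Fintype ι] (T : Finset (ι ×ₗ V)) :
    T.card = ∑ p, (fiber T p).card := by
  rw [card_eq_sum_card_fiberwise (f := fun x => (ofLex x).1) (t := univ) fun _ _ => mem_univ _]
  exact sum_congr rfl fun p _ => (card_fiber T p).symm

theorem filter_fiber (T : Finset (ι ×ₗ V)) (q : ι) (P : V → Prop) [DecidablePred P] :
    (fiber T q).filter P = fiber (T.filter fun u => P (ofLex u).2) q := by
  ext; simp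

theorem fiber_insert_self (T : Finset (ι ×ₗ V)) (q : ι) (w : V) :
    fiber (insert (toLex (q, w)) T) q = insert w (fiber T q) := by
  ext; simp

theorem fiber_insert_of_ne (T : Finset (ι ×ₗ V)) {p q : ι} (hpq : p ≠ q) (w : V) :
    fiber (insert (toLex (p, w)) T) q = fiber T q := by
  ext; simp [hpq.symm]

theorem fiber_replaceFiber_self (W : Finset (ι ×ₗ V)) (q : ι) (R : Finset V) :
    fiber (replaceFiber W q R) q = R := by
  ext; simp [replaceFiber]

theorem fiber_replaceFiber_of_ne (W : Finset (ι ×ₗ V)) {p q : ι} (hpq : p ≠ q)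
    (R : Finset V) :
    fiber (replaceFiber W q R) p = fiber W p := by
  ext; simp [replaceFiber, hpq, hpq.symm]

theorem card_filter_lt_toLex (T : Finset (ι ×ₗ V)) (q : ι) (w : V) :
    (T.filter (· < toLex (q, w))).card =
      (T.filter fun u => (ofLex u).1 < q).card + ((fiber T q).filter (· < w)).card := by
  rw [filter_fiber, card_fiber, filter_filter, ← card_union_of_disjoint
    (disjoint_filter.2 fun u _ h1 h2 => h1.ne h2.2), ← filter_or]
  exact congrArg card (filter_congr fun u _ => Prod.Lex.lt_iff.trans (by simp [and_comm]))

theorem subset_iff_forall_fiber_subset {T T' : Finset (ι ×ₗ V)} :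
    T ⊆ T' ↔ ∀ p, fiber T p ⊆ fiber T' p :=
  ⟨fiber_mono, fun h x hx => mem_fiber.1 (h (ofLex x).1 ((mem_fiber (w := (ofLex x).2)).2 hx))⟩

theorem subset_replaceFiber_iff {W : Finset (ι ×ₗ V)} {q : ι} {R : Finset V} :
    W ⊆ replaceFiber W q R ↔ fiber W q ⊆ R := by
  refine subset_iff_forall_fiber_subset.trans ⟨fun h => ?_, fun h p => ?_⟩
  · simpa only [fiber_replaceFiber_self] using h q
  · rcases eq_or_ne p q with rfl | hp
    · rwa [fiber_replaceFiber_self]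
    · rw [fiber_replaceFiber_of_ne _ hp]

theorem inducedOrient_replaceFiber (W : Finset (ι ×ₗ V)) (q : ι) (R : Finset V) (s : ℤ)
    (w : V) :
    inducedOrient (replaceFiber W q R) s (toLex (q, w)) =
      signBefore W q * inducedOrient R s w := by
  have hlt : (replaceFiber W q R).filter (fun u => (ofLex u).1 < q) =
      W.filter fun u => (ofLex u).1 < q := by
    ext u
    simp only [replaceFiber, mem_filter, mem_union, mem_image]
    constructor
    · rintro ⟨⟨hu, -⟩ | ⟨w, -, rfl⟩, hlt⟩
      · exact ⟨hu, hlt⟩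
      · exact absurd hlt (lt_irrefl q)
    · exact fun ⟨hu, hlt⟩ => ⟨Or.inl ⟨hu, hlt.ne⟩, hlt⟩
  unfold inducedOrient signBefore
  rw [card_filter_lt_toLex, hlt, fiber_replaceFiber_self, add_assoc, pow_add]
  ring

theorem inducesOrientOn_replaceFiber_iff {W : Finset (ι ×ₗ V)} {q : ι} {R : Finset V}
    {o s : ℤ} :
    InducesOrientOn W o (replaceFiber W q R, s) ↔
      InducesOrientOn (fiber W q) (signBefore W q * o) (R, s) := by
  refine and_congr subset_replaceFiber_iff ⟨?_, ?_⟩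
  · rintro ⟨v, hv, hvW, hvo⟩
    obtain ⟨hv, -⟩ | ⟨w, hw, rfl⟩ : (v ∈ W ∧ _) ∨ ∃ w ∈ R, toLex (q, w) = v := by
      simpa only [replaceFiber, mem_union, mem_filter, mem_image] using hv
    · exact absurd hv hvW
    · rw [inducedOrient_replaceFiber,
        Int.mul_eq_iff_eq_mul_of_isUnit (isUnit_signBefore W q)] at hvo
      exact ⟨w, hw, mt mem_fiber.1 hvW, hvo⟩
  · rintro ⟨w, hw, hwW, hwo⟩
    refine ⟨toLex (q, w), mem_union_right _ (mem_image_of_mem _ hw), mt mem_fiber.2 hwW, ?_⟩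
    rw [inducedOrient_replaceFiber, Int.mul_eq_iff_eq_mul_of_isUnit (isUnit_signBefore W q)]
    exact hwo

theorem replaceFiber_fiber_self_of_eq {W T : Finset (ι ×ₗ V)} {q : ι}
    (h : ∀ p ≠ q, fiber T p = fiber W p) : replaceFiber W q (fiber T q) = T := by
  refine ext_fiber fun p => ?_
  rcases eq_or_ne p q with rfl | hp
  · exact fiber_replaceFiber_self _ _ _
  · rw [fiber_replaceFiber_of_ne _ hp, h p hp]

theorem replaceFiber_injective {W : Finset (ι ×ₗ V)} {q : ι} :
    Function.Injective (replaceFiber W q) := fun R R' h => by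
  rw [← fiber_replaceFiber_self W q R, h, fiber_replaceFiber_self]

theorem prod_fiber_replaceFiber [Fintype ι] {M : Type*} [CommMonoid M] {W : Finset (ι ×ₗ V)}
    {q : ι} {R : Finset V} (f : ι → Finset V → M) :
    ∏ p, f p (fiber (replaceFiber W q R) p) =
      f q R * ∏ p ∈ univ.erase q, f p (fiber W p) := by
  rw [← mul_prod_erase univ _ (mem_univ q), fiber_replaceFiber_self]
  exact congrArg _ (prod_congr rfl fun p hp => by
    rw [fiber_replaceFiber_of_ne _ (ne_of_mem_erase hp)])

theorem card_fiber_insert {W : Finset (ι ×ₗ V)} {v : ι ×ₗ V} (hv : v ∉ W) (p : ι) :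
    (fiber (insert v W) p).card = (fiber W p).card + if p = (ofLex v).1 then 1 else 0 := by
  obtain ⟨⟨q, w⟩, rfl⟩ : ∃ y, toLex y = v := ⟨ofLex v, rfl⟩
  rcases eq_or_ne p q with rfl | hp
  · rw [fiber_insert_self, card_insert_of_notMem (mt mem_fiber.1 hv)]
    simp
  · rw [fiber_insert_of_ne _ hp.symm]
    simp [hp]

end Fiber

section OikSum

variable {ι V : Type*} [LinearOrder ι] [Fintype ι] [LinearOrder V]

def IsOikSum (OR : ι → Multiset (Finset V × ℤ)) (S : Multiset (Finset (ι ×ₗ V) × ℤ)) :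
    Prop :=
  ∀ T s, S.count (T, s) = ∑ ε : ι → Bool,
    if ∏ p, boolSign (ε p) = s then ∏ p, (OR p).count (fiber T p, boolSign (ε p)) else 0

variable {OR : ι → Multiset (Finset V × ℤ)} {S : Multiset (Finset (ι ×ₗ V) × ℤ)}
  {d : ι → ℕ}

theorem IsOikSum.exists_of_mem (hS : IsOikSum OR S) {x : Finset (ι ×ₗ V) × ℤ}
    (hx : x ∈ S) :
    ∃ ε : ι → Bool, ∏ p, boolSign (ε p) = x.2 ∧
      ∀ p, (fiber x.1 p, boolSign (ε p)) ∈ OR p := by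
  rw [← Multiset.count_ne_zero, hS] at hx
  obtain ⟨ε, -, hε⟩ := exists_ne_zero_of_sum_ne_zero hx
  by_cases hs : ∏ p, boolSign (ε p) = x.2
  · rw [if_pos hs, prod_ne_zero_iff] at hε
    exact ⟨ε, hs, fun p => Multiset.count_ne_zero.1 (hε p (mem_univ p))⟩
  · exact absurd (if_neg hs) hε

theorem IsOikSum.isUnit_of_mem (hS : IsOikSum OR S) {x : Finset (ι ×ₗ V) × ℤ}
    (hx : x ∈ S) : IsUnit x.2 := by
  obtain ⟨ε, hε, -⟩ := hS.exists_of_mem hx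
  exact hε ▸ IsUnit.prod_univ_iff.2 fun p => isUnit_boolSign _

theorem IsOikSum.card_fiber_of_mem (hS : IsOikSum OR S)
    (hOR : ∀ p, ∀ x ∈ OR p, x.1.card = d p ∧ IsUnit x.2)
    {x : Finset (ι ×ₗ V) × ℤ} (hx : x ∈ S) (p : ι) : (fiber x.1 p).card = d p := by
  obtain ⟨ε, -, hε⟩ := hS.exists_of_mem hx
  exact (hOR p _ (hε p)).1

theorem IsOikSum.card_of_mem (hS : IsOikSum OR S)
    (hOR : ∀ p, ∀ x ∈ OR p, x.1.card = d p ∧ IsUnit x.2)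
    {x : Finset (ι ×ₗ V) × ℤ} (hx : x ∈ S) : x.1.card = ∑ p, d p := by
  rw [card_eq_sum_card_fiber]
  exact sum_congr rfl fun p _ => hS.card_fiber_of_mem hOR hx p

theorem IsOikSum.replaceFiber_fiber_of_mem (hS : IsOikSum OR S)
    (hOR : ∀ p, ∀ x ∈ OR p, x.1.card = d p ∧ IsUnit x.2) {W : Finset (ι ×ₗ V)} {q : ι}
    (hW : ∀ p ≠ q, (fiber W p).card = d p) {x : Finset (ι ×ₗ V) × ℤ} (hx : x ∈ S)
    (hWx : W ⊆ x.1) : replaceFiber W q (fiber x.1 q) = x.1 :=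
  replaceFiber_fiber_self_of_eq fun p hp => (eq_of_subset_of_card_le (fiber_mono hWx p)
    (by rw [hW p hp, hS.card_fiber_of_mem hOR hx p])).symm

theorem IsOikSum.sum_ite_count (hS : IsOikSum OR S) (T : Finset (ι ×ₗ V)) (P : ℤ → Prop)
    [DecidablePred P] :
    ∑ b, (if P (boolSign b) then S.count (T, boolSign b) else 0) =
      ∑ ε : ι → Bool, if P (∏ p, boolSign (ε p)) then
        ∏ p, (OR p).count (fiber T p, boolSign (ε p)) else 0 := by
  have hsign : ∀ ε : ι → Bool, ∑ b, (if P (boolSign b) then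
      (if ∏ p, boolSign (ε p) = boolSign b then ∏ p, (OR p).count (fiber T p, boolSign (ε p))
        else 0) else 0) =
      if P (∏ p, boolSign (ε p)) then ∏ p, (OR p).count (fiber T p, boolSign (ε p))
        else 0 := by
    intro ε
    obtain ⟨b₀, hb₀⟩ :=
      exists_boolSign_eq (IsUnit.prod_univ_iff.2 fun p => isUnit_boolSign (ε p))
    rw [← hb₀]
    cases b₀ <;> simp [boolSign_injective.eq_iff]
  simp only [hS T, ← sum_congr rfl fun ε _ => hsign ε]
  rw [sum_comm]
  simp only [sum_ite_irrel, sum_const_zero]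

theorem IsOikSum.wallCount_eq (hS : IsOikSum OR S)
    (hOR : ∀ p, ∀ x ∈ OR p, x.1.card = d p ∧ IsUnit x.2) {W : Finset (ι ×ₗ V)} {q : ι}
    (hW : ∀ p ≠ q, (fiber W p).card = d p) (o : ℤ) :
    wallCount S W o = ∑ ε : ι → Bool, ∑ R ∈ (OR q).toFinset.image Prod.fst,
      if InducesOrientOn (fiber W q) ((∏ p ∈ univ.erase q, boolSign (ε p)) *
          (signBefore W q * o)) (R, boolSign (ε q)) then
        (OR q).count (R, boolSign (ε q)) *
          ∏ p ∈ univ.erase q, (OR p).count (fiber W p, boolSign (ε p))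
      else 0 := by
  have hcover : ∀ x ∈ S, InducesOrientOn W o x →
      x ∈ ((OR q).toFinset.image Prod.fst ×ˢ univ).image
        fun Rb => (replaceFiber W q Rb.1, boolSign Rb.2) := by
    intro x hx hWx
    obtain ⟨ε, -, hε⟩ := hS.exists_of_mem hx
    obtain ⟨b, hb⟩ := exists_boolSign_eq (hS.isUnit_of_mem hx)
    exact mem_image.2 ⟨(fiber x.1 q, b), mem_product.2
      ⟨mem_image_of_mem _ (Multiset.mem_toFinset.2 (hε q)), mem_univ _⟩,
      Prod.ext (hS.replaceFiber_fiber_of_mem hOR hW hx hWx.1) hb⟩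
  have hinj :
      Function.Injective fun Rb : Finset V × Bool => (replaceFiber W q Rb.1, boolSign Rb.2) :=
    replaceFiber_injective.prodMap boolSign_injective
  have hterm : ∀ (R : Finset V) (ε : ι → Bool),
      (if InducesOrientOn W o (replaceFiber W q R, ∏ p, boolSign (ε p)) then
        ∏ p, (OR p).count (fiber (replaceFiber W q R) p, boolSign (ε p)) else 0) =
      if InducesOrientOn (fiber W q) ((∏ p ∈ univ.erase q, boolSign (ε p)) *
          (signBefore W q * o)) (R, boolSign (ε q)) then
        (OR q).count (R, boolSign (ε q)) *
          ∏ p ∈ univ.erase q, (OR p).count (fiber W p, boolSign (ε p))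
      else 0 := by
    intro R ε
    refine if_congr ?_ (prod_fiber_replaceFiber fun p F => (OR p).count (F, boolSign (ε p))) rfl
    rw [← mul_prod_erase univ _ (mem_univ q), inducesOrientOn_replaceFiber_iff,
      inducesOrientOn_mul_iff (IsUnit.prod_iff.2 fun p _ => isUnit_boolSign _)]
  rw [wallCount, Multiset.countP_eq_sum_of_forall_mem hcover, sum_image hinj.injOn, sum_product]
  refine (sum_congr rfl fun R _ => ?_).trans sum_comm
  exact (hS.sum_ite_count _ (fun s => InducesOrientOn W o (replaceFiber W q R, s))).trans
    (sum_congr rfl fun ε _ => hterm R ε)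

theorem IsOikSum.two_mul_wallCount (hS : IsOikSum OR S)
    (hOR : ∀ p, ∀ x ∈ OR p, x.1.card = d p ∧ IsUnit x.2) {W : Finset (ι ×ₗ V)} {q : ι}
    (hW : ∀ p ≠ q, (fiber W p).card = d p) (o : ℤ) :
    2 * wallCount S W o = ∑ ε : ι → Bool,
      wallCount (OR q) (fiber W q) ((∏ p ∈ univ.erase q, boolSign (ε p)) *
          (signBefore W q * o)) *
        ∏ p ∈ univ.erase q, (OR p).count (fiber W p, boolSign (ε p)) := by
  have herase : ∀ {β : Type} (f : ι → Bool → β) [CommMonoid β] (ε : ι → Bool) b,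
      ∏ p ∈ univ.erase q, f p (Function.update ε q b p) = ∏ p ∈ univ.erase q, f p (ε p) :=
    fun f _ ε b => prod_congr rfl fun p hp => by
      rw [Function.update_of_ne (ne_of_mem_erase hp)]
  -- Letting `ε q` range over both values frees the sign of the `q`-th room.
  rw [hS.wallCount_eq hOR hW, two_mul, ← Fintype.sum_sum_update_bool _ q]
  refine sum_congr rfl fun ε _ => ?_
  simp only [Function.update_self, herase (fun p b => boolSign b),
    herase (fun p b => (OR p).count (fiber W p, boolSign b)),
    wallCount_eq_sum_rooms fun x hx => ((hOR q x hx).2), sum_mul, ite_mul, zero_mul]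
  exact sum_comm

theorem IsOikSum.wallCount_one_eq_neg_one (hS : IsOikSum OR S)
    (hcoh : ∀ p, IsCoherentOik V (d p) (OR p)) {W : Finset (ι ×ₗ V)} {q : ι}
    (hW : ∀ p, (fiber W p).card + (if p = q then 1 else 0) = d p) :
    wallCount S W 1 = wallCount S W (-1) := by
  have hOR : ∀ p, ∀ x ∈ OR p, x.1.card = d p ∧ IsUnit x.2 := fun p =>
    (isCoherentOik_iff.1 (hcoh p)).1
  have hWq : (fiber W q).card = d q - 1 := by
    have := hW q
    rw [if_pos rfl] at this
    omega
  have hqwall :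
      ∀ u, IsUnit u → wallCount (OR q) (fiber W q) u = wallCount (OR q) (fiber W q) 1 := by
    intro u hu
    rcases Int.isUnit_iff.1 hu with rfl | rfl
    · rfl
    · exact ((isCoherentOik_iff.1 (hcoh q)).2 _ hWq).symm
  have hsum : ∀ o, IsUnit o → 2 * wallCount S W o = ∑ ε : ι → Bool,
      wallCount (OR q) (fiber W q) 1 *
        ∏ p ∈ univ.erase q, (OR p).count (fiber W p, boolSign (ε p)) := by
    intro o ho
    rw [hS.two_mul_wallCount hOR (q := q) fun p hp => by
      simpa only [if_neg hp, add_zero] using hW p]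
    refine sum_congr rfl fun ε _ => ?_
    rw [hqwall _ ((IsUnit.prod_iff.2 fun p _ => isUnit_boolSign _).mul
      ((isUnit_signBefore W q).mul ho))]
  have := (hsum 1 isUnit_one).trans (hsum (-1) isUnit_one.neg).symm
  omega

end OikSum

theorem stmt_15_general {V : Type*} [LinearOrder V] (h : ℕ)
    (d : Fin h → ℕ)
    (OR : Fin h → Multiset (Finset V × ℤ))
    (hcoh : ∀ p, IsCoherentOik V (d p) (OR p))
    (S : Multiset (Finset (Fin h ×ₗ V) × ℤ))
    (hS : ∀ (T : Finset (Fin h ×ₗ V)) (s : ℤ),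
      S.count (T, s) = ∑ ε : Fin h → Bool,
        if (∏ p, (if ε p then (1 : ℤ) else -1)) = s then
          ∏ p, (OR p).count
            (((T.filter fun x => (ofLex x).1 = p).image fun x => (ofLex x).2),
              if ε p then 1 else -1)
        else 0) :
    IsCoherentOik (Fin h ×ₗ V) (∑ p, d p) S := by
  have hsum : IsOikSum OR S := hS
  have hOR : ∀ p, ∀ x ∈ OR p, x.1.card = d p ∧ IsUnit x.2 := fun p =>
    (isCoherentOik_iff.1 (hcoh p)).1
  refine isCoherentOik_iff.2
    ⟨fun x hx => ⟨hsum.card_of_mem hOR hx, hsum.isUnit_of_mem hx⟩, fun W hW => ?_⟩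
  by_cases hwall : ∃ x ∈ S, W ⊆ x.1 ∧ ∃ v ∈ x.1, v ∉ W
  · obtain ⟨x, hx, hWx, v, hv, hvW⟩ := hwall
    have hins : insert v W = x.1 := by
      refine eq_of_subset_of_card_le (insert_subset hv hWx) ?_
      have := card_pos.2 ⟨v, hv⟩
      rw [card_insert_of_notMem hvW, hW, ← hsum.card_of_mem hOR hx]
      omega
    refine hsum.wallCount_one_eq_neg_one hcoh (q := (ofLex v).1) fun p => ?_
    rw [← card_fiber_insert hvW, hins, hsum.card_fiber_of_mem hOR hx]
  · have hzero : ∀ o, wallCount S W o = 0 := fun o =>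
      Multiset.countP_eq_zero.2 fun x hx ⟨hWx, v, hv, hvW, _⟩ =>
        hwall ⟨x, hx, hWx, v, hv, hvW⟩
    rw [hzero, hzero]

/-- If each oik 𝓡_p of an oik family is coherently oriented by σ_p, then the
oik-sum, with nodes of [h]×V ordered lexicographically and each summed room
R₁ ⊎ ⋯ ⊎ R_h oriented by the product Π_p σ_p(R_p), is coherently oriented:
here S is the multiset of oriented rooms (T, s) of the sum, where (T, s)
occurs once for every choice of oriented rooms (R_p, σ_p) ∈ OR p whose fibers
compose to T and whose signs have product s. -/
theorem stmt_15 {V : Type*} [LinearOrder V] (h : ℕ) (hh : 0 < h)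
    (d : Fin h → ℕ) (hd : ∀ p, 2 ≤ d p)
    (OR : Fin h → Multiset (Finset V × ℤ))
    (hcoh : ∀ p, IsCoherentOik V (d p) (OR p))
    (S : Multiset (Finset (Fin h ×ₗ V) × ℤ))
    (hS : ∀ (T : Finset (Fin h ×ₗ V)) (s : ℤ),
      S.count (T, s) = ∑ ε : Fin h → Bool,
        if (∏ p, (if ε p then (1 : ℤ) else -1)) = s then
          ∏ p, (OR p).count
            (((T.filter fun x => (ofLex x).1 = p).image fun x => (ofLex x).2),
              if ε p then 1 else -1)
        else 0) :
    IsCoherentOik (Fin h ×ₗ V) (∑ p, d p) S :=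
  stmt_15_general h d OR hcoh S hS
end

section
/- Let 𝓡_p be a d_p-oik on V for p ∈ [h] with |V| = Σ_p d_p. Then the number of ordered room partitions (R₁,...,R_h) with R_p ∈ 𝓡_p and ∪_p R_p = V is even. -/
open scoped Classical

/-- A d-dimensional Euler complex (d-oik) on V. -/
def IsOik (V : Type*) [DecidableEq V] (d : ℕ) (R : Multiset (Finset V)) : Prop :=
  (∀ r ∈ R, r.card = d) ∧
  ∀ W : Finset V, W.card = d - 1 → Even (R.countP fun r => W ⊆ r)

/-!
Treat `ZMod 2`-valued functions on `Finset V` as chains of the full simplex on `V`, with boundary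
`∂f (W) = ∑_{v ∉ W} f (W ∪ {v})` and disjoint-union convolution
`(f * g) (S) = ∑_{A ⊆ S} f A · g (S \ A)`. The oik axiom says that the multiplicity function of
an oik is a cycle, and over `ZMod 2` the boundary is a derivation for the convolution, so the
convolution of the `h` multiplicity functions is again a cycle. Its value at `V` is the number of
ordered room partitions mod 2, and a cycle vanishes at `V` because `∂f (V \ {x}) = f V`.
-/

namespace Oik

variable {V : Type*} [Fintype V] [DecidableEq V]

def boundary (f : Finset V → ZMod 2) (W : Finset V) : ZMod 2 :=
  ∑ v ∈ Wᶜ, f (insert v W)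

def IsCycle (f : Finset V → ZMod 2) : Prop :=
  ∀ W, boundary f W = 0

def conv (f g : Finset V → ZMod 2) (S : Finset V) : ZMod 2 :=
  ∑ A ∈ S.powerset, f A * g (S \ A)

def convProd : {n : ℕ} → (Fin n → Finset V → ZMod 2) → Finset V → ZMod 2
  | 0, _, S => if S = ∅ then 1 else 0
  | _ + 1, F, S => conv (F 0) (convProd fun i => F i.succ) S

section Leibniz

variable (f g : Finset V → ZMod 2) (W : Finset V)

lemma sum_compl_of_subset {A : Finset V} (hAW : A ⊆ W) (φ : V → ZMod 2) :
    ∑ v ∈ Aᶜ, φ v = ∑ v ∈ Wᶜ, φ v + ∑ v ∈ W \ A, φ v := by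
  have hsplit : Aᶜ \ (W \ A) = Wᶜ := by
    ext x
    have := @hAW x
    simp only [Finset.mem_sdiff, Finset.mem_compl]
    tauto
  rw [← Finset.sum_sdiff (s₁ := W \ A) (s₂ := Aᶜ), hsplit]
  exact fun x hx => Finset.mem_compl.mpr (Finset.mem_sdiff.mp hx).2

lemma boundary_conv_eq_sum :
    boundary (conv f g) W = ∑ A ∈ W.powerset, ∑ v ∈ Wᶜ,
      (f (insert v A) * g (W \ A) + f A * g (insert v (W \ A))) := by
  rw [Finset.sum_comm, boundary]
  refine Finset.sum_congr rfl fun v hv => ?_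
  have hvW : v ∉ W := Finset.mem_compl.mp hv
  rw [conv, Finset.sum_powerset_insert hvW, add_comm, ← Finset.sum_add_distrib]
  refine Finset.sum_congr rfl fun A hA => ?_
  have hvA : v ∉ A := fun h => hvW (Finset.mem_powerset.mp hA h)
  rw [Finset.insert_sdiff_insert, Finset.sdiff_insert_of_notMem hvW,
    Finset.insert_sdiff_of_notMem _ hvA]

lemma conv_boundary_left :
    conv (boundary f) g W = ∑ A ∈ W.powerset, ∑ v ∈ Wᶜ, f (insert v A) * g (W \ A)
      + ∑ A ∈ W.powerset, ∑ v ∈ W \ A, f (insert v A) * g (W \ A) := by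
  rw [conv, ← Finset.sum_add_distrib]
  refine Finset.sum_congr rfl fun A hA => ?_
  rw [boundary, Finset.sum_mul, sum_compl_of_subset W (Finset.mem_powerset.mp hA)]

lemma conv_boundary_right :
    conv f (boundary g) W = ∑ A ∈ W.powerset, ∑ v ∈ Wᶜ, f A * g (insert v (W \ A))
      + ∑ A ∈ W.powerset, ∑ v ∈ A, f A * g (insert v (W \ A)) := by
  rw [conv, ← Finset.sum_add_distrib]
  refine Finset.sum_congr rfl fun A hA => ?_
  rw [boundary, Finset.mul_sum, sum_compl_of_subset W Finset.sdiff_subset,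
    Finset.sdiff_sdiff_eq_self (Finset.mem_powerset.mp hA)]

omit [Fintype V] in
/-- The cross terms of `∂f * g` and `f * ∂g`, matched by `(A, v) ↦ (A ∪ {v}, v)`; in
characteristic two they cancel. -/
lemma sum_sdiff_eq_sum_mem :
    ∑ A ∈ W.powerset, ∑ v ∈ W \ A, f (insert v A) * g (W \ A)
      = ∑ A ∈ W.powerset, ∑ v ∈ A, f A * g (insert v (W \ A)) := by
  rw [Finset.sum_sigma', Finset.sum_sigma']
  refine Finset.sum_nbij' (fun p => ⟨insert p.2 p.1, p.2⟩) (fun p => ⟨p.1.erase p.2, p.2⟩)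
    ?_ ?_ ?_ ?_ ?_ <;> rintro ⟨A, v⟩ hp <;>
    simp only [Finset.mem_sigma, Finset.mem_powerset, Finset.mem_sdiff] at hp
  · simpa using Finset.insert_subset hp.2.1 hp.1
  · simpa using ⟨(Finset.erase_subset _ _).trans hp.1, hp.1 hp.2⟩
  · simp [Finset.erase_insert hp.2.2]
  · simp [Finset.insert_erase hp.2]
  · have hW : insert v (W \ insert v A) = W \ A := by
      rw [Finset.sdiff_insert, Finset.insert_erase (Finset.mem_sdiff.mpr hp.2)]
    simp only [hW]

lemma boundary_conv :
    boundary (conv f g) W = conv (boundary f) g W + conv f (boundary g) W := by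
  rw [boundary_conv_eq_sum, conv_boundary_left, conv_boundary_right, sum_sdiff_eq_sum_mem]
  simp only [Finset.sum_add_distrib]
  exact (by decide : ∀ a b c : ZMod 2, a + b = a + c + (b + c)) _ _ _

end Leibniz

lemma IsCycle.conv {f g : Finset V → ZMod 2} (hf : IsCycle f) (hg : IsCycle g) :
    IsCycle (conv f g) := by
  intro W
  rw [boundary_conv, show boundary f = 0 from funext hf, show boundary g = 0 from funext hg]
  simp [Oik.conv]

lemma isCycle_convProd {n : ℕ} {F : Fin n → Finset V → ZMod 2} (hF : ∀ i, IsCycle (F i)) :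
    IsCycle (convProd F) := by
  induction n with
  | zero =>
    intro W
    exact Finset.sum_eq_zero fun v _ => if_neg (Finset.insert_ne_empty v W)
  | succ n ih => exact (hF 0).conv (ih fun i => hF i.succ)

lemma IsCycle.apply_univ [Nonempty V] {f : Finset V → ZMod 2} (hf : IsCycle f) :
    f Finset.univ = 0 := by
  obtain ⟨x⟩ := ‹Nonempty V›
  simpa [boundary, Finset.insert_compl_self] using hf {x}ᶜ

omit [Fintype V] in
lemma convProd_empty {n : ℕ} (F : Fin n → Finset V → ZMod 2) :
    convProd F ∅ = ∏ p, F p ∅ := by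
  induction n with
  | zero => simp [convProd]
  | succ n ih => simp [convProd, conv, ih, Fin.prod_univ_succ]

def IsOrderedPartition {n : ℕ} (t : Fin n → Finset V) (S : Finset V) : Prop :=
  (∀ p q, p ≠ q → Disjoint (t p) (t q)) ∧ Finset.univ.biUnion t = S

omit [Fintype V] in
lemma isOrderedPartition_cons_iff {n : ℕ} (A : Finset V) (t : Fin n → Finset V)
    (S : Finset V) :
    IsOrderedPartition (Fin.cons A t : Fin (n + 1) → Finset V) S
      ↔ A ⊆ S ∧ IsOrderedPartition t (S \ A) := by
  have hdisj : (∀ p q, p ≠ q → Disjoint ((Fin.cons A t : Fin (n + 1) → Finset V) p)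
      ((Fin.cons A t : Fin (n + 1) → Finset V) q)) ↔ Disjoint A (Finset.univ.biUnion t) ∧
        ∀ p q, p ≠ q → Disjoint (t p) (t q) := by
    simp [Fin.forall_fin_succ, disjoint_comm, forall_and, eq_comm (a := (0 : Fin (n + 1))),
      Finset.disjoint_biUnion_right]
  have hunion : Finset.univ.biUnion (Fin.cons A t : Fin (n + 1) → Finset V)
      = A ∪ Finset.univ.biUnion t := by
    ext
    simp [Fin.exists_fin_succ]
  rw [IsOrderedPartition, IsOrderedPartition, hdisj, hunion]
  constructor
  · rintro ⟨⟨hAU, ht⟩, rfl⟩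
    exact ⟨Finset.subset_union_left, ht, by
      rw [Finset.union_sdiff_left, Finset.sdiff_eq_self_of_disjoint hAU.symm]⟩
  · rintro ⟨hAS, ht, hU⟩
    rw [hU]
    exact ⟨⟨Finset.disjoint_sdiff, ht⟩, Finset.union_sdiff_of_subset hAS⟩

lemma sum_pi_fin_succ {α M : Type*} [Fintype α] [AddCommMonoid M] {n : ℕ}
    (g : (Fin (n + 1) → α) → M) :
    ∑ t, g t = ∑ a : α, ∑ t : Fin n → α, g (Fin.cons a t) := by
  rw [← Fintype.sum_equiv (Fin.consEquiv fun _ => α) (fun p => g (Fin.cons p.1 p.2)) g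
    fun _ => rfl]
  exact Fintype.sum_prod_type _

lemma convProd_eq_sum {n : ℕ} (F : Fin n → Finset V → ZMod 2) (S : Finset V) :
    convProd F S = ∑ t, if IsOrderedPartition t S then ∏ p, F p (t p) else 0 := by
  induction n generalizing S with
  | zero => simp [convProd, IsOrderedPartition, eq_comm]
  | succ n ih =>
    rw [sum_pi_fin_succ, convProd, conv, ← Finset.sum_subset (Finset.subset_univ S.powerset)]
    · refine Finset.sum_congr rfl fun A hA => ?_
      simp only [Finset.mem_powerset] at hA
      simp only [ih, Finset.mul_sum, isOrderedPartition_cons_iff, hA, true_and,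
        Fin.prod_univ_succ, Fin.cons_zero, Fin.cons_succ, mul_ite, mul_zero]
    · intro A _ hA
      refine Finset.sum_eq_zero fun t _ => if_neg fun h => hA ?_
      exact Finset.mem_powerset.mpr ((isOrderedPartition_cons_iff A t S).mp h).1

lemma sum_ite_insert_eq {W r : Finset V} (hr : r.card = W.card + 1) :
    (∑ v ∈ Wᶜ, if insert v W = r then 1 else 0 : ℕ) = if W ⊆ r then 1 else 0 := by
  split_ifs with hWr
  · obtain ⟨a, ha, rfl⟩ := Finset.exists_eq_insert_iff.mpr ⟨hWr, hr.symm⟩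
    rw [Finset.sum_congr rfl fun v hv => if_congr (Finset.insert_inj (Finset.mem_compl.mp hv))
      rfl rfl, Finset.sum_ite_eq', if_pos (Finset.mem_compl.mpr ha)]
  · exact Finset.sum_eq_zero fun v _ =>
      if_neg fun h : insert v W = r => hWr (h ▸ Finset.subset_insert v W)

lemma sum_count_insert_eq_countP {d : ℕ} {R : Multiset (Finset V)} (hR : ∀ r ∈ R, r.card = d)
    {W : Finset V} (hW : W.card + 1 = d) :
    ∑ v ∈ Wᶜ, R.count (insert v W) = R.countP fun r => W ⊆ r := by
  induction R using Multiset.induction_on with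
  | empty => simp
  | cons r R ih =>
    have hr : r.card = W.card + 1 := (hR r (Multiset.mem_cons_self r R)).trans hW.symm
    simp only [Multiset.count_cons, Multiset.countP_cons, Finset.sum_add_distrib,
      ih fun r' h => hR r' (Multiset.mem_cons_of_mem h), sum_ite_insert_eq hr]

end Oik

open Oik in
lemma IsOik.isCycle_count {V : Type*} [Fintype V] [DecidableEq V] {d : ℕ}
    {R : Multiset (Finset V)} (hR : IsOik V d R) : IsCycle fun S => (R.count S : ZMod 2) := by
  intro W
  rw [boundary, ← Nat.cast_sum, ZMod.natCast_eq_zero_iff_even]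
  by_cases hW : W.card + 1 = d
  · rw [sum_count_insert_eq_countP hR.1 hW]
    exact hR.2 W (by omega)
  · rw [Finset.sum_eq_zero fun v hv => Multiset.count_eq_zero_of_notMem fun hmem => hW ?_]
    · exact Even.zero
    · rw [← hR.1 _ hmem, Finset.card_insert_of_notMem (Finset.mem_compl.mp hv)]

lemma IsOik.even_count_empty {V : Type*} [DecidableEq V] {d : ℕ} {R : Multiset (Finset V)}
    (hR : IsOik V d R) : Even (R.count ∅) := by
  rcases Nat.eq_zero_or_pos d with rfl | hd
  · have hempty : ∀ r ∈ R, ∅ = r := fun r hr => (Finset.card_eq_zero.mp (hR.1 r hr)).symm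
    rw [Multiset.count_eq_card.mpr hempty,
      ← Multiset.countP_eq_card.mpr fun r _ => Finset.empty_subset r]
    exact hR.2 ∅ rfl
  · rw [Multiset.count_eq_zero_of_notMem fun h => hd.ne' (hR.1 ∅ h ▸ Finset.card_empty)]
    exact Even.zero

open Oik in
theorem stmt_16_general {V : Type*} [Fintype V] [DecidableEq V] (h : ℕ) (hh : 0 < h)
    (d : Fin h → ℕ)
    (𝓡 : Fin h → Multiset (Finset V))
    (hoik : ∀ p, IsOik V (d p) (𝓡 p)) :
    Even (∑ t : Fin h → Finset V,
      if (∀ p q, p ≠ q → Disjoint (t p) (t q)) ∧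
          Finset.univ.biUnion t = Finset.univ then
        ∏ p, (𝓡 p).count (t p)
      else 0) := by
  set F : Fin h → Finset V → ZMod 2 := fun p S => ((𝓡 p).count S : ZMod 2)
  suffices convProd F Finset.univ = 0 by
    rw [← ZMod.natCast_eq_zero_iff_even, ← this, convProd_eq_sum]
    push_cast
    exact Finset.sum_congr rfl fun t _ => if_congr Iff.rfl rfl rfl
  rcases isEmpty_or_nonempty V with hV | hV
  · rw [Finset.univ_eq_empty, convProd_empty]
    exact Finset.prod_eq_zero (Finset.mem_univ ⟨0, hh⟩)
      (ZMod.natCast_eq_zero_iff_even.mpr (hoik _).even_count_empty)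
  · exact (isCycle_convProd fun p => (hoik p).isCycle_count).apply_univ

/-- Let 𝓡_p be a d_p-oik on V for p ∈ [h] with |V| = Σ_p d_p.  Then the
number of ordered room partitions (R₁,…,R_h) with R_p ∈ 𝓡_p and
R₁ ∪ ⋯ ∪ R_h = V — counted with the multiplicities of the rooms in the
oiks — is even. -/
theorem stmt_16 {V : Type*} [Fintype V] [DecidableEq V] (h : ℕ) (hh : 0 < h)
    (d : Fin h → ℕ) (hd : ∀ p, 2 ≤ d p)
    (𝓡 : Fin h → Multiset (Finset V))
    (hoik : ∀ p, IsOik V (d p) (𝓡 p))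
    (hV : Fintype.card V = ∑ p, d p) :
    Even (∑ t : Fin h → Finset V,
      if (∀ p q, p ≠ q → Disjoint (t p) (t q)) ∧
          Finset.univ.biUnion t = Finset.univ then
        ∏ p, (𝓡 p).count (t p)
      else 0) :=
  stmt_16_general h hh d 𝓡 hoik
end

section
/- Let C be a cycle in a graph G with a perfect matching M, such that every other edge of C belongs to M, and such that in a fixed traversal direction of C an even number of edges of C are forward-oriented with respect to a given orientation of G. Then the perfect matching M' = M △ C has sign opposite to M. -/
/-
Let σ be the permutation of the vertices that fixes everything off C and acts on C as the
rotation c_i ↦ c_{i+1}, preceded by the transposition of c_{2j} and c_{2j+1} whenever the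
edges c_{2j}c_{2j+1} ∈ M and c_{2j+1}c_{2j+2} ∉ M are oriented differently. Then σ carries
every oriented edge of M onto an oriented edge of M', so the listing of M' is σ composed with
the listing of M, up to a permutation of whole edge blocks, which is even. The rotation of the
2k vertices of C is odd, and the number of transpositions has the parity of the number of
forward edges of C, which is even; hence sign σ = -1.
-/

open Finset

/-- Listing the endpoints of the matched edges (each an ordered pair, in the
order of its orientation) one after the other. -/
def listing {n : ℕ} (e : Fin n → Fin (2 * n) × Fin (2 * n)) :
    Fin (2 * n) → Fin (2 * n) := fun i =>
  if i.val % 2 = 0 then (e ⟨i.val / 2, by omega⟩).1 else (e ⟨i.val / 2, by omega⟩).2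

open Equiv Equiv.Perm

lemma neg_one_pow_card_filter {ι : Type*} [Fintype ι] (q : ι → Prop) [DecidablePred q] :
    (-1 : ℤˣ) ^ #{i | q i} = ∏ i, if q i then -1 else 1 := by
  rw [prod_ite, prod_const, prod_const, one_pow, mul_one]

def pairEquiv (n : ℕ) : Fin n × Fin 2 ≃ Fin (2 * n) :=
  finProdFinEquiv.trans (finCongr (Nat.mul_comm n 2))

@[simp] lemma pairEquiv_apply_val (n : ℕ) (x : Fin n × Fin 2) :
    (pairEquiv n x : ℕ) = 2 * x.1 + x.2 := by
  simp [pairEquiv, add_comm]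

section Listing

variable {n : ℕ}

lemma listing_pairEquiv_zero (e : Fin n → Fin (2 * n) × Fin (2 * n)) (i : Fin n) :
    listing e (pairEquiv n (i, 0)) = (e i).1 := by
  simp [listing]

lemma listing_pairEquiv_one (e : Fin n → Fin (2 * n) × Fin (2 * n)) (i : Fin n) :
    listing e (pairEquiv n (i, 1)) = (e i).2 := by
  simp [listing, Nat.add_mod, Nat.add_div]

lemma eq_of_listing_injective {e : Fin n → Fin (2 * n) × Fin (2 * n)}
    (hinj : Function.Injective (listing e)) {i i' : Fin n} {v : Fin (2 * n)}
    (hv : (e i).1 = v ∨ (e i).2 = v) (hv' : (e i').1 = v ∨ (e i').2 = v) : i = i' := by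
  have slot : ∀ {i}, (e i).1 = v ∨ (e i).2 = v → ∃ r, listing e (pairEquiv n (i, r)) = v := by
    rintro i (h | h)
    exacts [⟨0, (listing_pairEquiv_zero e i).trans h⟩, ⟨1, (listing_pairEquiv_one e i).trans h⟩]
  obtain ⟨r, hr⟩ := slot hv
  obtain ⟨r', hr'⟩ := slot hv'
  exact congrArg Prod.fst ((pairEquiv n).injective (hinj (hr.trans hr'.symm)))

lemma sign_listing_eq_of_map_mem {e e' : Fin n → Fin (2 * n) × Fin (2 * n)}
    {p p' : Perm (Fin (2 * n))} (hp : ∀ u, p u = listing e u) (hp' : ∀ u, p' u = listing e' u)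
    (σ : Perm (Fin (2 * n))) (hσ : ∀ i, Prod.map σ σ (e i) ∈ univ.val.map e') :
    sign p' = sign σ * sign p := by
  choose τ _ hτ using fun i => Multiset.mem_map.mp (hσ i)
  have hτinj : Function.Injective τ := fun i i' h => by
    have hfst : (e i).1 = (e i').1 := by
      simpa [hτ] using congrArg (fun i => (e' i).1) h
    exact eq_of_listing_injective (fun u u' huu' => p.injective (by rwa [hp, hp]))
      (Or.inl rfl) (Or.inl hfst.symm)
  set T : Perm (Fin (2 * n)) := (pairEquiv n).permCongr
    (prodCongrLeft fun _ => Equiv.ofBijective τ hτinj.bijective_of_finite)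
  have hT : sign T = 1 := by
    simp [T, sign_permCongr, sign_prodCongrLeft, Int.units_sq]
  have hconj : p' * T = σ * p := by
    ext1 u
    obtain ⟨⟨i, r⟩, rfl⟩ := (pairEquiv n).surjective u
    simp only [Perm.mul_apply, T, permCongr_apply, symm_apply_apply, prodCongrLeft_apply,
      ofBijective_apply, hp, hp']
    fin_cases r
    · simp [listing_pairEquiv_zero, hτ]
    · simp [listing_pairEquiv_one, hτ]
  calc sign p' = sign (p' * T) := by rw [map_mul, hT, mul_one]
    _ = sign σ * sign p := by rw [hconj, map_mul]

end Listing

section Cycle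

variable {k : ℕ}

lemma finRotate_pairEquiv_zero (j : Fin k) :
    finRotate (2 * k) (pairEquiv k (j, 0)) = pairEquiv k (j, 1) := by
  ext
  simpa [Fin.val_add] using Nat.mod_eq_of_lt (by omega : 2 * (j : ℕ) + 1 < 2 * k)

def orient (b : Fin (2 * k) → Bool) (i : Fin (2 * k)) : Fin (2 * k) × Fin (2 * k) :=
  if b i then (i, finRotate _ i) else (finRotate _ i, i)

lemma orient_pairEquiv_zero_endpoint (b : Fin (2 * k) → Bool) (j : Fin k) (r : Fin 2) :
    (orient b (pairEquiv k (j, 0))).1 = pairEquiv k (j, r) ∨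
      (orient b (pairEquiv k (j, 0))).2 = pairEquiv k (j, r) := by
  fin_cases r <;> cases h : b (pairEquiv k (j, 0)) <;>
    simp [-finRotate_apply, orient, finRotate_pairEquiv_zero, h]

def pairSwap (s : Fin k → Bool) : Perm (Fin (2 * k)) :=
  (pairEquiv k).permCongr (prodCongrRight fun j => if s j then swap 0 1 else 1)

lemma pairSwap_apply (s : Fin k → Bool) (j : Fin k) (r : Fin 2) :
    pairSwap s (pairEquiv k (j, r)) = pairEquiv k (j, if s j then swap 0 1 r else r) := by
  by_cases h : s j <;> simp [pairSwap, h]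

lemma sign_pairSwap (s : Fin k → Bool) : sign (pairSwap s) = (-1) ^ #{j | s j} := by
  rw [pairSwap, sign_permCongr, sign_prodCongrRight, neg_one_pow_card_filter]
  refine prod_congr rfl fun j _ => ?_
  by_cases h : s j <;> simp [h]

/-- The swaps, at the pairs whose two cycle edges are oriented differently, are what make the
rotation carry each oriented matched edge onto the next oriented cycle edge. -/
def cycleShift (b : Fin (2 * k) → Bool) : Perm (Fin (2 * k)) :=
  finRotate (2 * k) * pairSwap fun j => b (pairEquiv k (j, 0)) ^^ b (pairEquiv k (j, 1))

lemma map_cycleShift_orient (b : Fin (2 * k) → Bool) (j : Fin k) :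
    Prod.map (cycleShift b) (cycleShift b) (orient b (pairEquiv k (j, 0))) =
      orient b (pairEquiv k (j, 1)) := by
  cases h0 : b (pairEquiv k (j, 0)) <;> cases h1 : b (pairEquiv k (j, 1)) <;>
    simp [-finRotate_apply, cycleShift, orient, pairSwap_apply, finRotate_pairEquiv_zero, h0, h1]

lemma neg_one_pow_card_xor_pairs (b : Fin (2 * k) → Bool) :
    (-1 : ℤˣ) ^ #{j | b (pairEquiv k (j, 0)) ^^ b (pairEquiv k (j, 1))} = (-1) ^ #{i | b i} := by
  rw [neg_one_pow_card_filter, neg_one_pow_card_filter, ← (pairEquiv k).prod_comp,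
    Fintype.prod_prod_type]
  refine prod_congr rfl fun j _ => ?_
  rw [Fin.prod_univ_two]
  cases b (pairEquiv k (j, 0)) <;> cases b (pairEquiv k (j, 1)) <;> simp

lemma sign_cycleShift (hk : 0 < k) (b : Fin (2 * k) → Bool) :
    sign (cycleShift b) = -(-1) ^ #{i | b i} := by
  have hodd : Odd (2 * k - 1) := ⟨k - 1, by omega⟩
  rw [cycleShift, map_mul, sign_finRotate, hodd.neg_one_pow, sign_pairSwap,
    neg_one_pow_card_xor_pairs, neg_one_mul]

end Cycle

def cycleEdge {k : ℕ} {V : Type*} (c : Fin (2 * k) → V) (b : Fin (2 * k) → Bool)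
    (i : Fin (2 * k)) : V × V :=
  Prod.map c c (orient b i)

section Alternating

variable {n k : ℕ} {e e' : Fin n → Fin (2 * n) × Fin (2 * n)} (c : Fin (2 * k) ↪ Fin (2 * n))
  (b : Fin (2 * k) → Bool)

lemma map_viaFintypeEmbedding_cycleEdge (j : Fin k) :
    Prod.map ((cycleShift b).viaFintypeEmbedding c) ((cycleShift b).viaFintypeEmbedding c)
      (cycleEdge c b (pairEquiv k (j, 0))) = cycleEdge c b (pairEquiv k (j, 1)) := by
  rw [cycleEdge, cycleEdge, ← map_cycleShift_orient]
  exact Prod.ext (viaFintypeEmbedding_apply_image _ _ _) (viaFintypeEmbedding_apply_image _ _ _)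

lemma eq_cycleEdge_of_endpoint (hinj : Function.Injective (listing e))
    (hmatched : univ.val.map (fun j => cycleEdge c b (pairEquiv k (j, 0))) ≤ univ.val.map e)
    {i : Fin n} {j : Fin k} {r : Fin 2}
    (hv : (e i).1 = c (pairEquiv k (j, r)) ∨ (e i).2 = c (pairEquiv k (j, r))) :
    e i = cycleEdge c b (pairEquiv k (j, 0)) := by
  obtain ⟨i₀, -, hi₀⟩ := Multiset.mem_map.mp (Multiset.mem_of_le hmatched
    (Multiset.mem_map_of_mem (fun j => cycleEdge c b (pairEquiv k (j, 0))) (mem_univ_val j)))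
  obtain rfl : i = i₀ := eq_of_listing_injective hinj hv <| by
    rw [hi₀]
    exact (orient_pairEquiv_zero_endpoint b j r).imp (congrArg c) (congrArg c)
  exact hi₀

lemma map_viaFintypeEmbedding_cycleShift_mem (hinj : Function.Injective (listing e))
    (hmatched : univ.val.map (fun j => cycleEdge c b (pairEquiv k (j, 0))) ≤ univ.val.map e)
    (he' : univ.val.map e' = univ.val.map e -
      univ.val.map (fun j => cycleEdge c b (pairEquiv k (j, 0))) +
      univ.val.map (fun j => cycleEdge c b (pairEquiv k (j, 1)))) (i : Fin n) :
    Prod.map ((cycleShift b).viaFintypeEmbedding c) ((cycleShift b).viaFintypeEmbedding c) (e i) ∈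
      univ.val.map e' := by
  rw [he', Multiset.mem_add]
  by_cases hcyc : ∃ t, (e i).1 = c t ∨ (e i).2 = c t
  · obtain ⟨t, ht⟩ := hcyc
    obtain ⟨⟨j, r⟩, rfl⟩ := (pairEquiv k).surjective t
    rw [eq_cycleEdge_of_endpoint c b hinj hmatched ht, map_viaFintypeEmbedding_cycleEdge]
    exact Or.inr (Multiset.mem_map_of_mem _ (mem_univ_val j))
  · push Not at hcyc
    have hfix : ∀ v, (∀ t, v ≠ c t) → (cycleShift b).viaFintypeEmbedding c v = v :=
      fun v hv => viaFintypeEmbedding_apply_notMem_range _ _ (by rintro ⟨t, rfl⟩; exact hv t rfl)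
    have hunmatched : e i ∉ univ.val.map fun j => cycleEdge c b (pairEquiv k (j, 0)) := by
      intro hmem
      obtain ⟨j, -, hj⟩ := Multiset.mem_map.mp hmem
      exact (hcyc _).1 (by rw [← hj]; rfl)
    have hfix_edge : Prod.map ((cycleShift b).viaFintypeEmbedding c)
        ((cycleShift b).viaFintypeEmbedding c) (e i) = e i :=
      Prod.ext (hfix _ fun t => (hcyc t).1) (hfix _ fun t => (hcyc t).2)
    refine Or.inl (Multiset.mem_sub.mpr ?_)
    rw [hfix_edge, Multiset.count_eq_zero.mpr hunmatched, Multiset.count_pos]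
    exact Multiset.mem_map_of_mem e (mem_univ_val i)

end Alternating

/-- Let C be a cycle c₀, c₁, …, c_{2k-1} (distinct vertices, indices mod 2k,
with nxt the cyclic successor of indices) in an oriented graph with perfect
matching M (given by the oriented edge list e, whose listing is a
permutation), such that every other edge of C — the edges from c_{2j} to
c_{2j+1} — belongs to M, the remaining edges of C are not in M, and, in the
traversal direction of C, an even number of edges of C are forward-oriented
(b i records whether the edge of C from c_i to c_{nxt i} is forward).  Then
the perfect matching M' = M △ C (the matched cycle edges removed, the other
cycle edges added with their orientations, given by the oriented edge list
e') has sign opposite to M. -/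
theorem stmt_17 (n k : ℕ) (hk : 0 < k)
    (e e' : Fin n → Fin (2 * n) × Fin (2 * n))
    (c : Fin (2 * k) → Fin (2 * n)) (hcinj : Function.Injective c)
    (nxt : Fin (2 * k) → Fin (2 * k))
    (hnxt : ∀ i, (nxt i).val = (i.val + 1) % (2 * k))
    (b : Fin (2 * k) → Bool)
    (oedge : Fin (2 * k) → Fin (2 * n) × Fin (2 * n))
    (hoedge : ∀ i, oedge i = if b i then (c i, c (nxt i)) else (c (nxt i), c i))
    (heven : Even ((Finset.univ.filter fun i => b i = true).card))
    (hmatched :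
      (Finset.univ.val.map fun j : Fin k => oedge ⟨2 * j.val, by omega⟩) ≤
        Finset.univ.val.map e)
    (he' : Finset.univ.val.map e' =
      Finset.univ.val.map e -
        (Finset.univ.val.map fun j : Fin k => oedge ⟨2 * j.val, by omega⟩) +
        Finset.univ.val.map fun j : Fin k => oedge (nxt ⟨2 * j.val, by omega⟩))
    (p p' : Equiv.Perm (Fin (2 * n)))
    (hp : ∀ i, p i = listing e i) (hp' : ∀ i, p' i = listing e' i) :
    Equiv.Perm.sign p' = -Equiv.Perm.sign p := by
  obtain rfl : nxt = finRotate (2 * k) := funext fun i => Fin.ext (by simp [hnxt, Fin.val_add])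
  obtain rfl : oedge = cycleEdge c b := funext fun i => by
    rw [hoedge, cycleEdge, orient]; split <;> rfl
  have hP0 : ∀ j : Fin k, (⟨2 * j.val, by omega⟩ : Fin (2 * k)) = pairEquiv k (j, 0) :=
    fun j => Fin.ext (by simp)
  simp only [hP0, finRotate_pairEquiv_zero] at hmatched he'
  have hinj : Function.Injective (listing e) := fun u u' h => p.injective (by rwa [hp, hp])
  rw [sign_listing_eq_of_map_mem hp hp' _
      (map_viaFintypeEmbedding_cycleShift_mem ⟨c, hcinj⟩ b hinj hmatched he'),
    viaFintypeEmbedding_sign, sign_cycleShift hk, heven.neg_one_pow, neg_one_mul]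
end
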